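/- The null space of the Shapley transformation matrix M of an n-leaf tree game (n ≥ 3) has dimension exactly n−3, and the vectors w_{I_1}, ..., w_{I_{n-3}} (one per internal edge, each having a 1 in its own internal-edge coordinate and 0 in the other internal-edge coordinates) form a basis of this null space. -/

import Mathlib

open Finset

/-- Split count `c(i,e)`: the number of leaves on the side of edge `e` containing leaf `i`. -/
def cnt {n : ℕ} {E : Type*} (side : E → Finset (Fin n)) (i : Fin n) (e : E) : ℕ :=
  if i ∈ side e then (side e).card else n - (side e).card

/-- Compatibility of two splits (holds for the splits of edges of a tree). -/
def Compatible {n : ℕ} (s t : Finset (Fin n)) : Prop :=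
  s ∩ t = ∅ ∨ s \ t = ∅ ∨ t \ s = ∅ ∨ s ∪ t = Finset.univ

/-!
The leaf columns of `M` form the matrix `a • J + b • 1` (`J` the all-ones matrix) with
`a = 1 / (n (n - 1))` and `b = (n - 2) / (n - 1)`. It is invertible because `b ≠ 0` and
`n a + b = 1`, so `M` is onto `ℝⁿ` and its kernel has dimension `n - 3`. The leaf coordinates of
`w_{I_k}` sum to `-1` (by counting the two sides of the split), after which `M w_{I_k} = 0` is a
one-line identity in `n` and `c(i, k)`. The internal-edge coordinates of the `w_{I_k}` are the
standard basis vectors, so they are independent and, by dimension, span the kernel.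
-/

open Module Submodule Matrix

theorem linearIndependent_of_comp_inr_eq_single {R m κ : Type*} [Semiring R] [DecidableEq κ]
    {W : κ → m ⊕ κ → R} (hW : ∀ k, W k ∘ Sum.inr = Pi.single k 1) : LinearIndependent R W := by
  have h : (fun k => LinearMap.funLeft R R Sum.inr (W k)) = fun k => Pi.single k 1 :=
    funext hW
  exact (h ▸ Pi.linearIndependent_single_one κ R).of_comp _

namespace Matrix

variable {R ι m κ : Type*} [Field R]

theorem smul_of_one_add_smul_one_mulVec [Fintype ι] [DecidableEq ι] (a b : R) (x : ι → R) :
    (a • of (fun _ _ => 1) + b • 1 : Matrix ι ι R) *ᵥ x = fun i => a * ∑ j, x j + b * x i := by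
  rw [add_mulVec, smul_mulVec, smul_mulVec, one_mulVec]
  ext i
  simp [mulVec, dotProduct]

theorem isUnit_smul_of_one_add_smul_one [Fintype ι] [DecidableEq ι] {a b : R} (hb : b ≠ 0)
    (hab : Fintype.card ι * a + b ≠ 0) : IsUnit (a • of (fun _ _ => 1) + b • 1 : Matrix ι ι R) := by
  rw [← mulVec_injective_iff_isUnit, ← coe_mulVecLin, injective_iff_map_eq_zero]
  intro x hx
  have hrow : ∀ i, a * ∑ j, x j + b * x i = 0 := fun i => by
    simpa only [mulVecLin_apply, smul_of_one_add_smul_one_mulVec, Pi.zero_apply] using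
      congrFun hx i
  have hsum : ∑ j, x j = 0 := by
    have := Finset.sum_eq_zero (s := Finset.univ) fun i _ => hrow i
    rw [Finset.sum_add_distrib, Finset.sum_const, ← Finset.mul_sum, nsmul_eq_mul,
      Finset.card_univ, ← mul_assoc, ← add_mul] at this
    exact (mul_eq_zero.mp this).resolve_left hab
  ext i
  simpa [hsum, hb] using hrow i

variable [Fintype m] [DecidableEq m] [Fintype κ] {M : Matrix m (m ⊕ κ) R}

theorem mulVecLin_surjective_of_isUnit_toCols₁ (hM : IsUnit M.toCols₁) :
    Function.Surjective M.mulVecLin := by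
  intro y
  obtain ⟨x, hx⟩ := mulVec_surjective_iff_isUnit.mpr hM y
  refine ⟨Sum.elim x 0, ?_⟩
  rw [mulVecLin_apply, ← fromCols_toCols M, fromCols_mulVec_sumElim, mulVec_zero, add_zero, hx]

theorem rank_eq_card_of_isUnit_toCols₁ (hM : IsUnit M.toCols₁) : M.rank = Fintype.card m := by
  rw [rank, LinearMap.range_eq_top.mpr (mulVecLin_surjective_of_isUnit_toCols₁ hM), finrank_top,
    finrank_fintype_fun_eq_card]

theorem finrank_ker_mulVecLin_of_isUnit_toCols₁ (hM : IsUnit M.toCols₁) :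
    finrank R (LinearMap.ker M.mulVecLin) = Fintype.card κ := by
  have := LinearMap.finrank_range_add_finrank_ker M.mulVecLin
  rw [LinearMap.range_eq_top.mpr (mulVecLin_surjective_of_isUnit_toCols₁ hM), finrank_top,
    finrank_fintype_fun_eq_card, finrank_fintype_fun_eq_card, Fintype.card_sum] at this
  omega

theorem span_eq_ker_mulVecLin_of_isUnit_toCols₁ [DecidableEq κ] (hM : IsUnit M.toCols₁)
    {W : κ → m ⊕ κ → R} (hker : ∀ k, M *ᵥ W k = 0) (hW : ∀ k, W k ∘ Sum.inr = Pi.single k 1) :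
    span R (Set.range W) = LinearMap.ker M.mulVecLin := by
  refine eq_of_le_of_finrank_le (span_le.mpr (Set.range_subset_iff.mpr hker)) ?_
  rw [finrank_ker_mulVecLin_of_isUnit_toCols₁ hM,
    finrank_span_eq_card (linearIndependent_of_comp_inr_eq_single hW)]

end Matrix

section Shapley

variable {n : ℕ} {E κ : Type*}

theorem cast_cnt (side : E → Finset (Fin n)) (i : Fin n) (e : E) :
    (cnt side i e : ℝ) = if i ∈ side e then (#(side e) : ℝ) else n - #(side e) := by
  unfold cnt
  split_ifs
  · rfl
  · rw [Nat.cast_sub (by simpa using card_le_univ (side e))]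

theorem sub_cast_card_ne_zero {s : Finset (Fin n)} (hs : s ≠ univ) : (n : ℝ) - #s ≠ 0 :=
  sub_ne_zero.mpr (by simpa using ((card_lt_iff_ne_univ s).mpr hs).ne')

noncomputable def shapleyMatrix (side : E → Finset (Fin n)) : Matrix (Fin n) E ℝ :=
  .of fun i e => ((n : ℝ) - cnt side i e) / (n * cnt side i e)

theorem shapleyMatrix_toCols₁ (hn : 2 ≤ n) {side : Fin n ⊕ κ → Finset (Fin n)}
    (hleaf : ∀ j, side (.inl j) = {j}) :
    (shapleyMatrix side).toCols₁ =
      (1 / (n * (n - 1)) : ℝ) • of (fun _ _ => 1) + ((n - 2) / (n - 1) : ℝ) • 1 := by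
  have hn0 : (n : ℝ) ≠ 0 := by norm_cast; omega
  have hn1 : (n : ℝ) - 1 ≠ 0 := by rw [sub_ne_zero]; norm_cast; omega
  ext i j
  simp only [toCols₁_apply, shapleyMatrix, of_apply, cast_cnt, hleaf, mem_singleton,
    card_singleton, Nat.cast_one, Matrix.add_apply, Matrix.smul_apply, one_apply, smul_eq_mul]
  split_ifs <;> field_simp <;> ring

theorem isUnit_shapleyMatrix_toCols₁ (hn : 3 ≤ n) {side : Fin n ⊕ κ → Finset (Fin n)}
    (hleaf : ∀ j, side (.inl j) = {j}) : IsUnit (shapleyMatrix side).toCols₁ := by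
  have hn1 : (n : ℝ) - 1 ≠ 0 := by rw [sub_ne_zero]; norm_cast; omega
  have hn2 : (n : ℝ) - 2 ≠ 0 := by rw [sub_ne_zero]; norm_cast; omega
  have hsum : (Fintype.card (Fin n) : ℝ) * (1 / (n * (n - 1))) + (n - 2) / (n - 1) = 1 := by
    rw [Fintype.card_fin]
    field_simp
    ring
  rw [shapleyMatrix_toCols₁ (by omega) hleaf]
  exact isUnit_smul_of_one_add_smul_one (div_ne_zero hn2 hn1) (by rw [hsum]; exact one_ne_zero)

variable [DecidableEq κ]

noncomputable def shapleyNullVector (side : Fin n ⊕ κ → Finset (Fin n)) (k : κ) : Fin n ⊕ κ → ℝ :=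
  Sum.elim (fun j => -(((n : ℝ) - cnt side j (.inr k) - 1) / (((n : ℝ) - 2) * cnt side j (.inr k))))
    (Pi.single k 1)

theorem shapleyNullVector_comp_inr (side : Fin n ⊕ κ → Finset (Fin n)) (k : κ) :
    shapleyNullVector side k ∘ Sum.inr = Pi.single k 1 :=
  Sum.elim_comp_inr _ _

theorem shapleyNullVector_inl (side : Fin n ⊕ κ → Finset (Fin n)) (k : κ) (j : Fin n) :
    shapleyNullVector side k (.inl j) =
      if j ∈ side (.inr k) then -(((n : ℝ) - #(side (.inr k)) - 1) / ((n - 2) * #(side (.inr k))))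
      else -(((#(side (.inr k)) : ℝ) - 1) / ((n - 2) * (n - #(side (.inr k))))) := by
  simp only [shapleyNullVector, Sum.elim_inl, cast_cnt]
  split_ifs <;> ring

theorem sum_shapleyNullVector_inl (hn : 3 ≤ n) {side : Fin n ⊕ κ → Finset (Fin n)} {k : κ}
    (hk : (side (.inr k)).Nonempty) (hk_univ : side (.inr k) ≠ univ) :
    ∑ j, shapleyNullVector side k (.inl j) = -1 := by
  have hn2 : (n : ℝ) - 2 ≠ 0 := by rw [sub_ne_zero]; norm_cast; omega
  have hs : (#(side (.inr k)) : ℝ) ≠ 0 := by exact_mod_cast hk.card_pos.ne'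
  have hs' := sub_cast_card_ne_zero hk_univ
  have hle : #(side (.inr k)) ≤ n := by simpa using card_le_univ (side (.inr k))
  simp only [shapleyNullVector_inl, sum_ite, sum_const, nsmul_eq_mul, filter_mem_eq_inter,
    univ_inter, filter_not, card_univ_sdiff, Fintype.card_fin, Nat.cast_sub hle]
  field_simp
  ring

theorem shapleyMatrix_mulVec_shapleyNullVector [Fintype κ] (hn : 3 ≤ n)
    {side : Fin n ⊕ κ → Finset (Fin n)} (hleaf : ∀ j, side (.inl j) = {j}) {k : κ}
    (hk : (side (.inr k)).Nonempty) (hk_univ : side (.inr k) ≠ univ) :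
    shapleyMatrix side *ᵥ shapleyNullVector side k = 0 := by
  have hn1 : (n : ℝ) - 1 ≠ 0 := by rw [sub_ne_zero]; norm_cast; omega
  have hn2 : (n : ℝ) - 2 ≠ 0 := by rw [sub_ne_zero]; norm_cast; omega
  have hs : (#(side (.inr k)) : ℝ) ≠ 0 := by exact_mod_cast hk.card_pos.ne'
  have hs' := sub_cast_card_ne_zero hk_univ
  rw [← fromCols_toCols (shapleyMatrix side), fromCols_mulVec, shapleyNullVector_comp_inr,
    mulVec_single_one, shapleyMatrix_toCols₁ (by omega) hleaf, smul_of_one_add_smul_one_mulVec]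
  simp only [Function.comp_apply, sum_shapleyNullVector_inl hn hk hk_univ]
  ext i
  simp only [Pi.add_apply, col_apply, toCols₂_apply, shapleyMatrix, of_apply,
    shapleyNullVector_inl, cast_cnt, Pi.zero_apply]
  split_ifs <;> field_simp <;> ring

end Shapley

theorem nullspace_basis_of_shapley_transformation {n : ℕ} (hn : 3 ≤ n)
    (side : Fin n ⊕ Fin (n - 3) → Finset (Fin n))
    (hleaf : ∀ j : Fin n, side (Sum.inl j) = {j})
    (hnontriv : ∀ e, (side e).Nonempty ∧ side e ≠ Finset.univ) :
    let c : Fin n → Fin n ⊕ Fin (n - 3) → ℝ := fun i e => (cnt side i e : ℝ)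
    let f : Fin n → Fin n ⊕ Fin (n - 3) → ℝ := fun i e => (n : ℝ) - c i e
    let M : Matrix (Fin n) (Fin n ⊕ Fin (n - 3)) ℝ := fun i e => f i e / ((n : ℝ) * c i e)
    let W : Fin (n - 3) → (Fin n ⊕ Fin (n - 3) → ℝ) := fun k e =>
      match e with
      | Sum.inl j => -((f j (Sum.inr k) - 1) / (((n : ℝ) - 2) * c j (Sum.inr k)))
      | Sum.inr k' => if k' = k then 1 else 0
    M.rank = n ∧
      LinearIndependent ℝ W ∧
      Submodule.span ℝ (Set.range W) = LinearMap.ker M.mulVecLin ∧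
      Module.finrank ℝ (LinearMap.ker M.mulVecLin) = n - 3 := by
  intro c f M W
  have hM : M = shapleyMatrix side := rfl
  have hW : W = shapleyNullVector side := by
    funext k e
    cases e with
    | inl j => rfl
    | inr k' => exact (Pi.single_apply k 1 k').symm
  have hunit := isUnit_shapleyMatrix_toCols₁ hn hleaf
  have hker k := shapleyMatrix_mulVec_shapleyNullVector hn hleaf (hnontriv (.inr k)).1
    (hnontriv (.inr k)).2
  have hinr := shapleyNullVector_comp_inr side
  rw [hM, hW]
  refine ⟨?_, linearIndependent_of_comp_inr_eq_single hinr,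
    span_eq_ker_mulVecLin_of_isUnit_toCols₁ hunit hker hinr, ?_⟩
  · rw [rank_eq_card_of_isUnit_toCols₁ hunit, Fintype.card_fin]
  · rw [finrank_ker_mulVecLin_of_isUnit_toCols₁ hunit, Fintype.card_fin]
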